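/- arXiv:2210.05646 — 5 statements merged into one kernel-verified Lean document; each statement's English description precedes it below -/
import Mathlib

section
/- Let V be a module over a ring R of characteristic 2 equipped with a nondegenerate sesquilinear form ⟨·,·⟩ (with respect to an involution * on R), and let T : V → V be an R-linear map that is self-adjoint (⟨Tx, y⟩ = ⟨x, Ty⟩ for all x, y). Then the operator U on V ⊕ V defined by U(x, y) = (Tx + (1+T)y, (1+T)x + Ty) is a unitary: it is invertible with U⁻¹ = U, and it is self-adjoint with respect to the induced form on V ⊕ V, hence U*U = UU* = I. Moreover P∘U∘ι = T, where ι : V → V ⊕ V is the inclusion x ↦ (x, 0) and P : V ⊕ V → V is the projection (x, y) ↦ x. (Indefinite Halmos dilation.) -/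
theorem indefinite_halmos_dilation
    (R : Type*) [Ring R] [StarRing R] [CharP R 2]
    (V : Type*) [AddCommGroup V] [Module R V]
    (B : V → V → R)
    (hnd : ∀ x : V, (∀ y : V, B x y = 0) → x = 0)
    (hsymm : ∀ x y : V, B x y = star (B y x))
    (hlin : ∀ (a : R) (x y z : V), B (a • x + y) z = a * B x z + B y z)
    (T : V →ₗ[R] V)
    (hT : ∀ x y : V, B (T x) y = B x (T y))
    (U : (V × V) →ₗ[R] (V × V))
    (hU : ∀ p : V × V,
      U p = (T p.1 + (p.2 + T p.2), (p.1 + T p.1) + T p.2)) :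
    (U ∘ₗ U = LinearMap.id) ∧
    (∀ p q : V × V,
        B (U p).1 q.1 + B (U p).2 q.2 = B p.1 (U q).1 + B p.2 (U q).2) ∧
    (∀ x : V, (U (x, 0)).1 = T x) := by
  have h2R : (2 : R) = 0 := by
    have := CharP.cast_eq_zero R 2
    simpa using this
  have hv : ∀ x : V, x + x = 0 := by
    intro x
    have : (2 : R) • x = 0 := by rw [h2R, zero_smul]
    calc x + x = (2 : R) • x := by rw [two_smul]
    _ = 0 := this
  have hv2 : ∀ x : V, (2 : ℤ) • x = 0 := by
    intro x
    rw [two_smul]; exact hv x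
  have hadd1 : ∀ x y z : V, B (x + y) z = B x z + B y z := by
    intro x y z
    have := hlin 1 x y z
    simpa using this
  have hadd2 : ∀ x y z : V, B x (y + z) = B x y + B x z := by
    intro x y z
    rw [hsymm, hadd1, star_add, ← hsymm, ← hsymm]
  refine ⟨?_, ?_, ?_⟩
  · ext p <;>
    · simp only [LinearMap.comp_apply, LinearMap.id_apply, hU, map_add]
      abel_nf
      simp [hv2]
  · intro p q
    simp only [hU]
    simp only [hadd1, hadd2, hT]
    abel
  · intro x
    simp [hU]
end

section
/- Let R be a commutative ring of characteristic 2 and T ∈ R. For N ≥ 1, consider the (N+1)×(N+1) matrix U over R whose first row is (T, 0, …, 0, 1+T), second row is (1+T, 0, …, 0, T), and whose rows 3 through N+1 are the standard shift: row k+1 has a 1 in column k−1 for k = 3, …, N+1 (i.e., U has the form of the Egervary dilation matrix). Then U is invertible, with inverse equal to its transpose, i.e., U is orthogonal: UᵀU = UUᵀ = I. -/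
open Matrix
/-- The Egervary dilation matrix over a ring of characteristic 2. -/
def egervaryU (R : Type*) [CommRing R] (N : ℕ) (T : R) :
    Matrix (Fin (N + 1)) (Fin (N + 1)) R :=
  Matrix.of fun i j =>
    if (i : ℕ) = 0 ∧ (j : ℕ) = 0 then T
    else if (i : ℕ) = 0 ∧ (j : ℕ) = N then 1 + T
    else if (i : ℕ) = 1 ∧ (j : ℕ) = 0 then 1 + T
    else if (i : ℕ) = 1 ∧ (j : ℕ) = N then T
    else if 2 ≤ (i : ℕ) ∧ (j : ℕ) + 1 = (i : ℕ) then 1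
    else 0

/-! The columns of `U` are `T e₀ + (1 + T) e₁` (first), `(1 + T) e₀ + T e₁` (last) and `e_{j+1}`
(column `j` in between). In characteristic 2 they are orthonormal, since `T² + (1 + T)² = 1` and
`2 T (1 + T) = 0`; hence `Uᵀ U = 1`, and a one-sided inverse of a square matrix over a commutative
ring is two-sided. -/

theorem Fin.eq_zero_or_eq_castSucc_succ_or_eq_last {N : ℕ} (j : Fin (N + 2)) :
    j = 0 ∨ (∃ m : Fin N, j = m.castSucc.succ) ∨ j = Fin.last _ := by
  induction j using Fin.cases with
  | zero => exact .inl rfl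
  | succ j =>
    induction j using Fin.lastCases with
    | last => exact .inr (.inr rfl)
    | cast m => exact .inr (.inl ⟨m, rfl⟩)

namespace egervaryU

variable {R : Type*} [CommRing R] {N : ℕ} (T : R)

theorem transpose_apply_zero :
    (egervaryU R (N + 1) T)ᵀ 0 = Pi.single 0 T + Pi.single 1 (1 + T) := by
  ext i
  induction i using Fin.cases with
  | zero => simp [egervaryU]
  | succ i =>
    induction i using Fin.cases with
    | zero => simp [egervaryU]
    | succ i => simp [egervaryU, i.succ_succ_ne_one]

theorem transpose_apply_last :
    (egervaryU R (N + 1) T)ᵀ (Fin.last _) = Pi.single 0 (1 + T) + Pi.single 1 T := by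
  ext i
  induction i using Fin.cases with
  | zero => simp [egervaryU]
  | succ i =>
    induction i using Fin.cases with
    | zero => simp [egervaryU]
    | succ i => simp [egervaryU, i.succ_succ_ne_one, i.isLt.ne']

theorem transpose_apply_castSucc_succ (m : Fin N) :
    (egervaryU R (N + 1) T)ᵀ m.castSucc.succ = Pi.single m.succ.succ 1 := by
  ext i
  induction i using Fin.cases with
  | zero => simp [egervaryU, m.isLt.ne]
  | succ i =>
    induction i using Fin.cases with
    | zero => simp [egervaryU, m.isLt.ne, (Fin.succ_succ_ne_one m).symm]
    | succ i => simp [egervaryU, Pi.single_apply, Fin.succ_inj, Fin.val_inj, eq_comm]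

theorem transpose_mul_self [CharP R 2] :
    (egervaryU R (N + 1) T)ᵀ * egervaryU R (N + 1) T = 1 := by
  ext j k
  rw [mul_apply']
  change (egervaryU R (N + 1) T)ᵀ j ⬝ᵥ (egervaryU R (N + 1) T)ᵀ k = _
  have hlast (m : Fin N) : Fin.last (N + 1) ≠ m.castSucc.succ :=
    ((Fin.succ_ne_last_iff _).2 (Fin.castSucc_ne_last m)).symm
  have hsq : T * T + (1 + T) * (1 + T) = 1 := by
    linear_combination (T ^ 2 + T) * CharTwo.two_eq_zero (R := R)
  have hcross : T * (1 + T) + (1 + T) * T = 0 := by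
    linear_combination (T ^ 2 + T) * CharTwo.two_eq_zero (R := R)
  obtain rfl | ⟨m, rfl⟩ | rfl := j.eq_zero_or_eq_castSucc_succ_or_eq_last <;>
  obtain rfl | ⟨n, rfl⟩ | rfl := k.eq_zero_or_eq_castSucc_succ_or_eq_last <;>
  simp [transpose_apply_zero, transpose_apply_last, transpose_apply_castSucc_succ, one_apply,
    Pi.single_apply, Fin.succ_succ_ne_one, eq_comm, hlast, hsq, hcross, (add_comm _ _).trans hsq,
    (add_comm _ _).trans hcross]

end egervaryU

theorem egervary_orthogonal (R : Type*) [CommRing R] [CharP R 2]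
    (T : R) (N : ℕ) (hN : 1 ≤ N) :
    (egervaryU R N T)ᵀ * egervaryU R N T = 1 ∧
    egervaryU R N T * (egervaryU R N T)ᵀ = 1 := by
  obtain ⟨M, rfl⟩ := Nat.exists_eq_add_of_le' hN
  have h := egervaryU.transpose_mul_self T (N := M)
  exact ⟨h, mul_eq_one_comm.mp h⟩
end

section
/- Let R be a commutative ring of characteristic 2, T ∈ R, and N ≥ 1. Let U be the (N+1)×(N+1) Egervary dilation matrix (U₀₀ = T, U₀,N = 1+T, U₁₀ = 1+T, U₁,N = T, Uₖ,ₖ₋₁ = 1 for 2 ≤ k ≤ N, all other entries 0). Then for every k with 1 ≤ k ≤ N, the (0,0) entry of Uᵏ equals Tᵏ. (Egervary N-dilation power property.) -/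
lemma egervary_row0 (R : Type*) [CommRing R] (T : R) {N : ℕ} (hN : 1 ≤ N) :
    ∀ k : ℕ, 1 ≤ k → k ≤ N → ∀ j : Fin (N + 1),
      (egervaryU R N T ^ k) 0 j =
        if (j : ℕ) = 0 then T ^ k
        else if (j : ℕ) + k ≤ N then 0
        else (1 + T) * T ^ ((j : ℕ) + k - (N + 1)) := by
  intro k
  induction k with
  | zero => intro h; omega
  | succ k ih =>
    intro _ hkN j
    have h0v : ((0 : Fin (N + 1)) : ℕ) = 0 := Fin.val_zero _
    have hjlt : (j : ℕ) < N + 1 := j.isLt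
    rcases Nat.eq_zero_or_pos k with hk0 | hk1
    · subst hk0
      rw [pow_one]
      simp only [egervaryU, Matrix.of_apply, h0v]
      by_cases hj0 : (j : ℕ) = 0
      · rw [if_pos ⟨by trivial, hj0⟩, if_pos hj0, pow_one]
      · rw [if_neg (by omega), if_neg hj0]
        by_cases hjN : (j : ℕ) = N
        · rw [if_pos ⟨by trivial, hjN⟩, if_neg (by omega)]
          have he : (j : ℕ) + 1 - (N + 1) = 0 := by omega
          rw [he, pow_zero, mul_one]
        · rw [if_neg (by omega), if_neg (by omega), if_neg (by omega),
            if_neg (by omega), if_pos (by omega)]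
    · have hkN' : k ≤ N := by omega
      have h1v : ((⟨1, by omega⟩ : Fin (N + 1)) : ℕ) = 1 := rfl
      rw [pow_succ, Matrix.mul_apply]
      by_cases hj0 : (j : ℕ) = 0
      · rw [Fintype.sum_eq_add (0 : Fin (N + 1)) ⟨1, by omega⟩
          (by simp [Fin.ext_iff])
          (by
            intro c hc
            obtain ⟨hc0, hc1⟩ := hc
            have hc0' : (c : ℕ) ≠ 0 := fun h => hc0 (Fin.ext (h.trans h0v.symm))
            have hc1' : (c : ℕ) ≠ 1 := fun h => hc1 (Fin.ext (h.trans h1v.symm))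
            have hz : egervaryU R N T c j = 0 := by
              simp only [egervaryU, Matrix.of_apply]
              rw [if_neg (by omega), if_neg (by omega), if_neg (by omega),
                if_neg (by omega), if_neg (by omega)]
            rw [hz, mul_zero])]
        have h00 : egervaryU R N T 0 j = T := by
          simp only [egervaryU, Matrix.of_apply, h0v]
          rw [if_pos ⟨by trivial, hj0⟩]
        have h10 : egervaryU R N T ⟨1, by omega⟩ j = 1 + T := by
          simp only [egervaryU, Matrix.of_apply, h1v]
          rw [if_neg (by omega), if_neg (by omega), if_pos ⟨by trivial, hj0⟩]
        have hv0 : (egervaryU R N T ^ k) 0 0 = T ^ k := by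
          rw [ih hk1 hkN' 0, h0v, if_pos rfl]
        have hv1 : (egervaryU R N T ^ k) 0 ⟨1, by omega⟩ = 0 := by
          rw [ih hk1 hkN' ⟨1, by omega⟩, h1v, if_neg (by omega), if_pos (by omega)]
        rw [h00, h10, hv0, hv1, if_pos hj0]
        ring
      · by_cases hjN : (j : ℕ) = N
        · rw [Fintype.sum_eq_add (0 : Fin (N + 1)) ⟨1, by omega⟩
            (by simp [Fin.ext_iff])
            (by
              intro c hc
              obtain ⟨hc0, hc1⟩ := hc
              have hc0' : (c : ℕ) ≠ 0 := fun h => hc0 (Fin.ext (h.trans h0v.symm))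
              have hc1' : (c : ℕ) ≠ 1 := fun h => hc1 (Fin.ext (h.trans h1v.symm))
              have hz : egervaryU R N T c j = 0 := by
                simp only [egervaryU, Matrix.of_apply]
                rw [if_neg (by omega), if_neg (by omega), if_neg (by omega),
                  if_neg (by omega), if_neg (by omega)]
              rw [hz, mul_zero])]
          have h00 : egervaryU R N T 0 j = 1 + T := by
            simp only [egervaryU, Matrix.of_apply, h0v]
            rw [if_neg (by omega), if_pos ⟨by trivial, hjN⟩]
          have h10 : egervaryU R N T ⟨1, by omega⟩ j = T := by
            simp only [egervaryU, Matrix.of_apply, h1v]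
            rw [if_neg (by omega), if_neg (by omega), if_neg (by omega),
              if_pos ⟨by trivial, hjN⟩]
          have hv0 : (egervaryU R N T ^ k) 0 0 = T ^ k := by
            rw [ih hk1 hkN' 0, h0v, if_pos rfl]
          have hv1 : (egervaryU R N T ^ k) 0 ⟨1, by omega⟩ = 0 := by
            rw [ih hk1 hkN' ⟨1, by omega⟩, h1v, if_neg (by omega), if_pos (by omega)]
          rw [h00, h10, hv0, hv1, if_neg hj0, if_neg (by omega)]
          have he : (j : ℕ) + (k + 1) - (N + 1) = k := by omega
          rw [he]
          ring
        · -- middle column: 1 ≤ j ≤ N - 1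
          obtain ⟨m, hmval⟩ : ∃ m : Fin (N + 1), (m : ℕ) = (j : ℕ) + 1 :=
            ⟨⟨(j : ℕ) + 1, by omega⟩, rfl⟩
          rw [Fintype.sum_eq_single m
            (by
              intro c hc
              have hc' : (c : ℕ) ≠ (j : ℕ) + 1 := fun h => hc (Fin.ext (h.trans hmval.symm))
              have hz : egervaryU R N T c j = 0 := by
                simp only [egervaryU, Matrix.of_apply]
                rw [if_neg (by omega), if_neg (by omega), if_neg (by omega),
                  if_neg (by omega), if_neg (by omega)]
              rw [hz, mul_zero])]
          have hU : egervaryU R N T m j = 1 := by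
            simp only [egervaryU, Matrix.of_apply]
            rw [if_neg (by omega), if_neg (by omega), if_neg (by omega),
              if_neg (by omega), if_pos (by omega)]
          rw [hU, mul_one, ih hk1 hkN' m, hmval,
            if_neg (by omega), if_neg hj0]
          by_cases hle : (j : ℕ) + (k + 1) ≤ N
          · rw [if_pos (by omega), if_pos hle]
          · rw [if_neg (by omega), if_neg hle]
            have he : (j : ℕ) + 1 + k - (N + 1) = (j : ℕ) + (k + 1) - (N + 1) := by omega
            rw [he]

theorem egervary_power_dilation (R : Type*) [CommRing R] [CharP R 2]
    (T : R) (N : ℕ) (hN : 1 ≤ N) :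
    ∀ k : ℕ, 1 ≤ k → k ≤ N → (egervaryU R N T ^ k) 0 0 = T ^ k := by
  intro k hk1 hkN
  rw [egervary_row0 R T hN k hk1 hkN 0, Fin.val_zero, if_pos rfl]
end

section
/- With the setup of the indefinite Sz.-Nagy dilation (V a module over a ring of characteristic 2, T : V → V self-adjoint, W = ⊕_{n∈ℤ}V, U the dilation operator with (Ux)₋₁ = (1+T)x₀ + Tx₁, (Ux)₀ = Tx₀ + (1+T)x₁, (Ux)ₙ = xₙ₊₁ otherwise), for every natural number n ≥ 1 and every v ∈ V one has P(Uⁿ(ι(v))) = Tⁿv, where ι : V → W embeds v in coordinate 0 (zero elsewhere) and P : W → V extracts coordinate 0. (Sz.-Nagy power dilation equation.) -/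
/-!
Starting from `ι v`, the coordinates at positive indices stay zero under `U`, since off `-1` and `0`
the operator `U` is the left shift. With `x₁ = 0`, the formula for `(U x)₀` collapses to `T x₀`,
so the `0`-th coordinate of `Uⁿ (ι v)` evolves exactly as `Tⁿ v`.
-/

section

variable {R V : Type*} [Semiring R] [AddCommMonoid V] [Module R V]
  {T : V →ₗ[R] V} {U : (ℤ →₀ V) →ₗ[R] (ℤ →₀ V)}

theorem pow_apply_of_pos_eq_zero
    (hU₃ : ∀ (x : ℤ →₀ V) (n : ℤ), n ≠ -1 → n ≠ 0 → (U x) n = x (n + 1))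
    {x : ℤ →₀ V} (hx : ∀ k, 0 < k → x k = 0) (m : ℕ) :
    ∀ k, 0 < k → (U ^ m) x k = 0 := by
  induction m with
  | zero => exact hx
  | succ m ih =>
    intro k hk
    rw [pow_succ', Module.End.mul_apply, hU₃ _ k (by omega) hk.ne']
    exact ih (k + 1) (by omega)

theorem pow_apply_zero_of_pos_eq_zero
    (hU₂ : ∀ x : ℤ →₀ V, (U x) 0 = T (x 0) + (x 1 + T (x 1)))
    (hU₃ : ∀ (x : ℤ →₀ V) (n : ℤ), n ≠ -1 → n ≠ 0 → (U x) n = x (n + 1))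
    {x : ℤ →₀ V} (hx : ∀ k, 0 < k → x k = 0) (m : ℕ) :
    (U ^ m) x 0 = (T ^ m) (x 0) := by
  induction m with
  | zero => rfl
  | succ m ih =>
    have h₁ : (U ^ m) x 1 = 0 := pow_apply_of_pos_eq_zero hU₃ hx m 1 one_pos
    rw [pow_succ', Module.End.mul_apply, hU₂, h₁, ih, map_zero T, add_zero, add_zero,
      pow_succ', Module.End.mul_apply]

end

theorem sznagy_power_dilation_general
    (R : Type*) [Ring R]
    (V : Type*) [AddCommGroup V] [Module R V]
    (T : V →ₗ[R] V)
    (U : (ℤ →₀ V) →ₗ[R] (ℤ →₀ V))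
    (hU₂ : ∀ x : ℤ →₀ V, (U x) 0 = T (x 0) + (x 1 + T (x 1)))
    (hU₃ : ∀ (x : ℤ →₀ V) (n : ℤ), n ≠ -1 → n ≠ 0 → (U x) n = x (n + 1)) :
    ∀ n : ℕ, 1 ≤ n → ∀ v : V, ((U ^ n) (Finsupp.single 0 v)) 0 = (T ^ n) v := by
  intro n _ v
  have hpos : ∀ k : ℤ, 0 < k → Finsupp.single 0 v k = 0 := fun k hk =>
    Finsupp.single_eq_of_ne hk.ne'
  simpa using pow_apply_zero_of_pos_eq_zero hU₂ hU₃ hpos n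

theorem sznagy_power_dilation
    (R : Type*) [Ring R] [CharP R 2]
    (V : Type*) [AddCommGroup V] [Module R V]
    (T : V →ₗ[R] V)
    (U : (ℤ →₀ V) →ₗ[R] (ℤ →₀ V))
    (hU₁ : ∀ x : ℤ →₀ V, (U x) (-1) = (x 0 + T (x 0)) + T (x 1))
    (hU₂ : ∀ x : ℤ →₀ V, (U x) 0 = T (x 0) + (x 1 + T (x 1)))
    (hU₃ : ∀ (x : ℤ →₀ V) (n : ℤ), n ≠ -1 → n ≠ 0 → (U x) n = x (n + 1)) :
    ∀ n : ℕ, 1 ≤ n → ∀ v : V, ((U ^ n) (Finsupp.single 0 v)) 0 = (T ^ n) v :=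
  sznagy_power_dilation_general R V T U hU₂ hU₃
end

section
/- Let R be a commutative ring of characteristic 2 and T ∈ R. Define U on finitely supported ℤ-indexed sequences over R by (Ux)₋₁ = (1+T)x₀ + Tx₁, (Ux)₀ = Tx₀ + (1+T)x₁, (Ux)ₙ = xₙ₊₁ for n ∉ {−1,0}. Then U preserves the bilinear form B(x,y) = Σₙ xₙyₙ, i.e., B(Ux, Uy) = B(x, y) for all finitely supported x, y. -/
/-!
Outside the coordinates `-1, 0` the operator `U` is the backward shift, which matches the terms
`(Ux)ₙ(Uy)ₙ` with `xₙ₊₁yₙ₊₁`. On the remaining two coordinates `U` acts by the matrix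
`[[1+T, T], [T, 1+T]]`, which is orthogonal in characteristic 2 because
`T² + (1+T)² = 1` and `2T(1+T) = 0`.
-/

open Finset

lemma CharTwo.dot_rotation {R : Type*} [CommRing R] [CharP R 2] (T a₀ a₁ b₀ b₁ : R) :
    ((1 + T) * a₀ + T * a₁) * ((1 + T) * b₀ + T * b₁) +
      (T * a₀ + (1 + T) * a₁) * (T * b₀ + (1 + T) * b₁) = a₀ * b₀ + a₁ * b₁ := by
  linear_combination (T + T ^ 2) * (a₀ * b₀ + a₁ * b₁ + a₀ * b₁ + a₁ * b₀) * CharTwo.two_eq_zero (R := R)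

lemma Finsupp.sum_mul_apply_of_support_subset {ι R : Type*} [CommSemiring R] (x y : ι →₀ R)
    {s : Finset ι} (hs : x.support ⊆ s) :
    (x.sum fun n a => a * y n) = ∑ n ∈ s, x n * y n :=
  x.sum_of_support_subset hs _ fun _ _ => zero_mul _

lemma support_subset_image_sub_one_of_eq_shift {R : Type*} [Zero R] {z w : ℤ →₀ R}
    (hw : ∀ n : ℤ, n ≠ -1 → n ≠ 0 → w n = z (n + 1)) :
    w.support ⊆ (z.support ∪ {0, 1}).image (· - 1) := by
  intro n hn
  refine mem_image.mpr ⟨n + 1, ?_, add_sub_cancel_right n 1⟩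
  by_cases hn₀ : n = -1 ∨ n = 0
  · rcases hn₀ with rfl | rfl <;> simp
  · rw [not_or] at hn₀
    rw [Finsupp.mem_support_iff, hw n hn₀.1 hn₀.2] at hn
    exact mem_union_left _ (Finsupp.mem_support_iff.mpr hn)

theorem sznagy_form_preserving
    (R : Type*) [CommRing R] [CharP R 2] (T : R)
    (U : (ℤ →₀ R) →ₗ[R] (ℤ →₀ R))
    (hU₁ : ∀ x : ℤ →₀ R, (U x) (-1) = (1 + T) * x 0 + T * x 1)
    (hU₂ : ∀ x : ℤ →₀ R, (U x) 0 = T * x 0 + (1 + T) * x 1)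
    (hU₃ : ∀ (x : ℤ →₀ R) (n : ℤ), n ≠ -1 → n ≠ 0 → (U x) n = x (n + 1)) :
    ∀ x y : ℤ →₀ R,
      ((U x).sum fun n a => a * (U y) n) = x.sum fun n a => a * y n := by
  intro x y
  set S := x.support ∪ {0, 1}
  have hD : ({0, 1} : Finset ℤ) ⊆ S := subset_union_right
  have hshift : ((U x).sum fun n a => a * (U y) n) = ∑ m ∈ S, U x (m - 1) * U y (m - 1) := by
    rw [Finsupp.sum_mul_apply_of_support_subset _ _
        (support_subset_image_sub_one_of_eq_shift (hU₃ x)),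
      sum_image sub_left_injective.injOn]
  rw [hshift, Finsupp.sum_mul_apply_of_support_subset _ _ subset_union_left,
    ← sum_sdiff hD, ← sum_sdiff hD (f := fun m => x m * y m)]
  congr 1
  · refine sum_congr rfl fun m hm => ?_
    obtain ⟨-, hm₀₁⟩ := mem_sdiff.mp hm
    simp only [mem_insert, mem_singleton, not_or] at hm₀₁
    have h₁ : m - 1 ≠ -1 := fun h => hm₀₁.1 (by omega)
    have h₀ : m - 1 ≠ 0 := fun h => hm₀₁.2 (by omega)
    rw [hU₃ x _ h₁ h₀, hU₃ y _ h₁ h₀, sub_add_cancel]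
  · rw [sum_pair zero_ne_one, sum_pair zero_ne_one, zero_sub, sub_self, hU₁, hU₁, hU₂, hU₂]
    exact CharTwo.dot_rotation T _ _ _ _
end
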